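/- For every T ≥ 4 and every classical solution u of the 1-D homogeneous wave equation on (-1,1) with homogeneous Dirichlet boundary conditions, the boundary observability inequality holds: 4·E(u(0)) ≤ ∫_0^T |u_x(1,t)|² dt. -/

import Mathlib

/-!
Along the characteristics `x + σ t = const` (`σ = ±1`) the Riemann invariants `u_t + σ u_x` are
constant: their derivative along the line is `σ (u_xx - u_tt) = 0`, by the symmetry of the second
derivative of `u`. The Dirichlet condition forces `u_t = 0` at `x = a` and `x = b`, so following
characteristics back to `t = 0`, with one reflection at `x = a`, the trace `u_x(b, t)` runs
through `u_x - u_t` of the initial data for `t ∈ [0, L]` and through `u_t + u_x` for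
`t ∈ [L, 2L]`, where `L = b - a`. Hence
`∫₀^{2L} u_x(b, t)² dt = ∫ₐᵇ ((u_x - u_t)² + (u_t + u_x)²)(x, 0) dx = 2 ∫ₐᵇ (u_t² + u_x²)(x, 0) dx`.
-/

open MeasureTheory Set Function

lemma eq_of_continuousOn_Icc_of_hasDerivAt_zero {f : ℝ → ℝ} {a b x y : ℝ}
    (hf : ContinuousOn f (Icc a b)) (hf' : ∀ z ∈ Ioo a b, HasDerivAt f 0 z)
    (hx : x ∈ Icc a b) (hy : y ∈ Icc a b) : f x = f y := by
  wlog hxy : x < y generalizing x y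
  · rcases (not_lt.1 hxy).eq_or_lt with h | h
    · rw [h]
    · exact (this hy hx h).symm
  obtain ⟨c, -, hslope⟩ := exists_hasDerivAt_eq_slope f (fun _ => 0) hxy
    (hf.mono (Icc_subset_Icc hx.1 hy.2))
    (fun z hz => hf' z ⟨hx.1.trans_lt hz.1, hz.2.trans_le hy.2⟩)
  rw [eq_comm, div_eq_zero_iff, sub_eq_zero] at hslope
  exact (hslope.resolve_right (sub_ne_zero.2 hxy.ne')).symm

lemma HasDerivAt.fderiv_apply_comp {E F : Type*} [NormedAddCommGroup E]
    [NormedSpace ℝ E] [NormedAddCommGroup F] [NormedSpace ℝ F] {U : E → F} {γ : ℝ → E} {v : E}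
    {s : ℝ} (hγ : HasDerivAt γ v s) (hU : ContDiffAt ℝ 2 U (γ s)) (w : E) :
    HasDerivAt (fun r => fderiv ℝ U (γ r) w) (fderiv ℝ (fderiv ℝ U) (γ s) v w) s := by
  have hD : HasFDerivAt (fderiv ℝ U) (fderiv ℝ (fderiv ℝ U) (γ s)) (γ s) :=
    ((hU.fderiv_right (m := 1) le_rfl).differentiableAt one_ne_zero).hasFDerivAt
  simpa [comp_def] using
    (hD.clm_apply (hasFDerivAt_const w _)).comp_hasDerivAt s hγ

section Slices

variable {s : Set ℝ} {u : ℝ → ℝ → ℝ} {x t d : ℝ}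

lemma fderivWithin_uncurry_apply_zero_one (hx : x ∈ s)
    (hu : DifferentiableWithinAt ℝ (uncurry u) (s ×ˢ univ) (x, t))
    (hd : HasDerivAt (u x ·) d t) :
    fderivWithin ℝ (uncurry u) (s ×ˢ univ) (x, t) (0, 1) = d := by
  have hline : HasDerivAt (fun τ => (x, τ)) ((0 : ℝ), (1 : ℝ)) t :=
    (hasDerivAt_const t x).prodMk (hasDerivAt_id t)
  have hcomp := hu.hasFDerivWithinAt.comp_hasDerivWithinAt t (hline.hasDerivWithinAt (s := univ))
    fun τ _ => mk_mem_prod hx (mem_univ τ)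
  exact (hasDerivWithinAt_univ.1 hcomp).unique hd

lemma fderivWithin_uncurry_apply_one_zero (hs : UniqueDiffWithinAt ℝ s x)
    (hu : DifferentiableWithinAt ℝ (uncurry u) (s ×ˢ univ) (x, t))
    (hd : HasDerivWithinAt (u · t) d s x) :
    fderivWithin ℝ (uncurry u) (s ×ˢ univ) (x, t) (1, 0) = d := by
  have hline : HasDerivAt (fun ξ => (ξ, t)) ((1 : ℝ), (0 : ℝ)) x :=
    (hasDerivAt_id x).prodMk (hasDerivAt_const x t)
  have hcomp := hu.hasFDerivWithinAt.comp_hasDerivWithinAt x (hline.hasDerivWithinAt (s := s))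
    fun ξ hξ => mk_mem_prod hξ (mem_univ t)
  exact hs.eq_deriv _ hcomp hd

end Slices

structure IsClassicalWaveSolution (a b : ℝ) (u ut ux utt uxx : ℝ → ℝ → ℝ) : Prop where
  contDiffOn : ContDiffOn ℝ 2 (uncurry u) (Icc a b ×ˢ univ)
  hasDerivAt_ut : ∀ x ∈ Icc a b, ∀ t, HasDerivAt (u x ·) (ut x t) t
  hasDerivAt_utt : ∀ x ∈ Icc a b, ∀ t, HasDerivAt (ut x ·) (utt x t) t
  hasDerivWithinAt_ux : ∀ t, ∀ x ∈ Icc a b, HasDerivWithinAt (u · t) (ux x t) (Icc a b) x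
  hasDerivWithinAt_uxx : ∀ t, ∀ x ∈ Icc a b, HasDerivWithinAt (ux · t) (uxx x t) (Icc a b) x
  wave : ∀ x ∈ Ioo a b, ∀ t, utt x t = uxx x t

namespace IsClassicalWaveSolution

variable {a b : ℝ} {u ut ux utt uxx : ℝ → ℝ → ℝ}
  (h : IsClassicalWaveSolution a b u ut ux utt uxx)
include h

lemma continuousOn_ut (hab : a < b) : ContinuousOn (uncurry ut) (Icc a b ×ˢ univ) := by
  have hS : UniqueDiffOn ℝ (Icc a b ×ˢ (univ : Set ℝ)) :=
    (uniqueDiffOn_Icc hab).prod uniqueDiffOn_univ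
  have hD : ContinuousOn
      (fun z => fderivWithin ℝ (uncurry u) (Icc a b ×ˢ univ) z ((0 : ℝ), (1 : ℝ)))
      (Icc a b ×ˢ univ) :=
    (h.contDiffOn.continuousOn_fderivWithin hS one_le_two).clm_apply continuousOn_const
  refine hD.congr fun z hz => ?_
  exact (fderivWithin_uncurry_apply_zero_one hz.1
    (h.contDiffOn.differentiableOn two_ne_zero z hz) (h.hasDerivAt_ut z.1 hz.1 z.2)).symm

lemma continuousOn_ux (hab : a < b) : ContinuousOn (uncurry ux) (Icc a b ×ˢ univ) := by
  have hS : UniqueDiffOn ℝ (Icc a b ×ˢ (univ : Set ℝ)) :=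
    (uniqueDiffOn_Icc hab).prod uniqueDiffOn_univ
  have hD : ContinuousOn
      (fun z => fderivWithin ℝ (uncurry u) (Icc a b ×ˢ univ) z ((1 : ℝ), (0 : ℝ)))
      (Icc a b ×ˢ univ) :=
    (h.contDiffOn.continuousOn_fderivWithin hS one_le_two).clm_apply continuousOn_const
  refine hD.congr fun z hz => ?_
  exact (fderivWithin_uncurry_apply_one_zero (uniqueDiffOn_Icc hab z.1 hz.1)
    (h.contDiffOn.differentiableOn two_ne_zero z hz) (h.hasDerivWithinAt_ux z.2 z.1 hz.1)).symm

lemma contDiffAt {x : ℝ} (hx : x ∈ Ioo a b) (t : ℝ) : ContDiffAt ℝ 2 (uncurry u) (x, t) :=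
  h.contDiffOn.contDiffAt (prod_mem_nhds (Icc_mem_nhds hx.1 hx.2) Filter.univ_mem)

lemma ut_eq_fderiv {x : ℝ} (hx : x ∈ Ioo a b) (t : ℝ) :
    ut x t = fderiv ℝ (uncurry u) (x, t) (0, 1) := by
  rw [← fderivWithin_of_mem_nhds (prod_mem_nhds (Icc_mem_nhds hx.1 hx.2) Filter.univ_mem)]
  exact (fderivWithin_uncurry_apply_zero_one (Ioo_subset_Icc_self hx)
    ((h.contDiffAt hx t).differentiableAt two_ne_zero).differentiableWithinAt
    (h.hasDerivAt_ut x (Ioo_subset_Icc_self hx) t)).symm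

lemma ux_eq_fderiv {x : ℝ} (hx : x ∈ Ioo a b) (t : ℝ) :
    ux x t = fderiv ℝ (uncurry u) (x, t) (1, 0) := by
  rw [← fderivWithin_of_mem_nhds (prod_mem_nhds (Icc_mem_nhds hx.1 hx.2) Filter.univ_mem)]
  exact (fderivWithin_uncurry_apply_one_zero
    (uniqueDiffWithinAt_of_mem_nhds (Icc_mem_nhds hx.1 hx.2))
    ((h.contDiffAt hx t).differentiableAt two_ne_zero).differentiableWithinAt
    (h.hasDerivWithinAt_ux t x (Ioo_subset_Icc_self hx))).symm

lemma utt_eq_fderiv_fderiv {x : ℝ} (hx : x ∈ Ioo a b) (t : ℝ) :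
    utt x t = fderiv ℝ (fderiv ℝ (uncurry u)) (x, t) (0, 1) (0, 1) := by
  have hline : HasDerivAt (fun τ => (x, τ)) ((0 : ℝ), (1 : ℝ)) t :=
    (hasDerivAt_const t x).prodMk (hasDerivAt_id t)
  refine (h.hasDerivAt_utt x (Ioo_subset_Icc_self hx) t).unique ?_
  exact (hline.fderiv_apply_comp (h.contDiffAt hx t) (0, 1)).congr_of_eventuallyEq
    (Filter.Eventually.of_forall fun τ => h.ut_eq_fderiv hx τ)

lemma uxx_eq_fderiv_fderiv {x : ℝ} (hx : x ∈ Ioo a b) (t : ℝ) :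
    uxx x t = fderiv ℝ (fderiv ℝ (uncurry u)) (x, t) (1, 0) (1, 0) := by
  have hline : HasDerivAt (fun ξ => (ξ, t)) ((1 : ℝ), (0 : ℝ)) x :=
    (hasDerivAt_id x).prodMk (hasDerivAt_const x t)
  refine ((h.hasDerivWithinAt_uxx t x (Ioo_subset_Icc_self hx)).hasDerivAt
    (Icc_mem_nhds hx.1 hx.2)).unique ?_
  refine (hline.fderiv_apply_comp (h.contDiffAt hx t) (1, 0)).congr_of_eventuallyEq ?_
  filter_upwards [Ioo_mem_nhds hx.1 hx.2] with ξ hξ using h.ux_eq_fderiv hξ t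

lemma hasDerivAt_riemannInvariant {σ : ℝ} (hσ : σ ^ 2 = 1) (c : ℝ) {x : ℝ} (hx : x ∈ Ioo a b) :
    HasDerivAt (fun ξ => ut ξ (c - σ * ξ) + σ * ux ξ (c - σ * ξ)) 0 x := by
  have hline : HasDerivAt (fun ξ => (ξ, c - σ * ξ)) ((1 : ℝ), -σ) x :=
    (hasDerivAt_id x).prodMk (by simpa using ((hasDerivAt_id x).const_mul σ).const_sub c)
  have hD := hline.fderiv_apply_comp (h.contDiffAt hx (c - σ * x)) (σ, 1)
  have hdir : ((1 : ℝ), -σ) = ((1 : ℝ), (0 : ℝ)) - σ • ((0 : ℝ), (1 : ℝ)) := by simp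
  have hval : (σ, (1 : ℝ)) = σ • ((1 : ℝ), (0 : ℝ)) + ((0 : ℝ), (1 : ℝ)) := by simp
  have hsymm := (h.contDiffAt hx (c - σ * x)).isSymmSndFDerivAt (by simp) (1, 0) (0, 1)
  -- `B (1, -σ) (σ, 1) = σ (uxx - utt) + (1 - σ²) uxt` for the symmetric second derivative `B`
  have hzero : fderiv ℝ (fderiv ℝ (uncurry u)) (x, c - σ * x) (1, -σ) (σ, 1) = 0 := by
    rw [hdir, hval]
    simp only [map_sub, map_add, map_smul, sub_apply, smul_apply, smul_eq_mul]
    rw [hsymm, ← h.utt_eq_fderiv_fderiv hx, ← h.uxx_eq_fderiv_fderiv hx, h.wave x hx]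
    linear_combination -(fderiv ℝ (fderiv ℝ (uncurry u)) (x, c - σ * x) (0, 1) (1, 0)) * hσ
  rw [hzero] at hD
  refine hD.congr_of_eventuallyEq ?_
  filter_upwards [Ioo_mem_nhds hx.1 hx.2] with ξ hξ
  simp only [h.ut_eq_fderiv hξ, h.ux_eq_fderiv hξ, hval, map_add, map_smul, smul_eq_mul]
  ring

lemma riemannInvariant_eq (hab : a < b) {σ : ℝ} (hσ : σ ^ 2 = 1) {x₁ t₁ x₂ t₂ : ℝ}
    (hx₁ : x₁ ∈ Icc a b) (hx₂ : x₂ ∈ Icc a b) (hchar : x₁ + σ * t₁ = x₂ + σ * t₂) :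
    ut x₁ t₁ + σ * ux x₁ t₁ = ut x₂ t₂ + σ * ux x₂ t₂ := by
  set c := t₁ + σ * x₁
  have hline : ContinuousOn (fun ξ => (ξ, c - σ * ξ)) (Icc a b) := by fun_prop
  have hmaps : MapsTo (fun ξ => (ξ, c - σ * ξ)) (Icc a b) (Icc a b ×ˢ univ) :=
    fun ξ hξ => mk_mem_prod hξ (mem_univ _)
  have hcont : ContinuousOn (fun ξ => ut ξ (c - σ * ξ) + σ * ux ξ (c - σ * ξ)) (Icc a b) :=
    ((h.continuousOn_ut hab).comp hline hmaps).add
      (continuousOn_const.mul ((h.continuousOn_ux hab).comp hline hmaps))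
  have hconst := eq_of_continuousOn_Icc_of_hasDerivAt_zero hcont
    (fun ξ hξ => h.hasDerivAt_riemannInvariant hσ c hξ) hx₁ hx₂
  rwa [show c - σ * x₁ = t₁ by ring,
    show c - σ * x₂ = t₂ by linear_combination σ * hchar - (t₁ - t₂) * hσ] at hconst

lemma ut_eq_zero_of_forall_eq_zero {x : ℝ} (hx : x ∈ Icc a b) (hzero : ∀ t, u x t = 0)
    (t : ℝ) : ut x t = 0 :=
  (h.hasDerivAt_ut x hx t).unique (by simpa [hzero] using hasDerivAt_const t (0 : ℝ))

lemma continuous_ux (hab : a < b) {x : ℝ} (hx : x ∈ Icc a b) : Continuous (ux x ·) :=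
  continuousOn_univ.1 <| (h.continuousOn_ux hab).comp (by fun_prop)
    fun t _ => mk_mem_prod hx (mem_univ t)

variable (hab : a < b) (hbc : ∀ t, u a t = 0 ∧ u b t = 0)
include hab hbc

lemma ux_right_eq_of_le {t : ℝ} (ht : t ∈ Icc 0 (b - a)) :
    ux b t = ux (b - t) 0 - ut (b - t) 0 := by
  have hq := h.riemannInvariant_eq hab (σ := -1) (by norm_num) (right_mem_Icc.2 hab.le)
    (t₁ := t) (x₂ := b - t) (t₂ := 0) ⟨by linarith [ht.2], by linarith [ht.1]⟩ (by ring)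
  have hb := h.ut_eq_zero_of_forall_eq_zero (right_mem_Icc.2 hab.le) (fun t => (hbc t).2) t
  linarith

lemma ux_right_eq_of_ge {t : ℝ} (ht : t ∈ Icc (b - a) (2 * (b - a))) :
    ux b t = ut (t + 2 * a - b) 0 + ux (t + 2 * a - b) 0 := by
  have ha : a ∈ Icc a b := left_mem_Icc.2 hab.le
  have hq := h.riemannInvariant_eq hab (σ := -1) (by norm_num) (right_mem_Icc.2 hab.le) ha
    (t₁ := t) (t₂ := t - (b - a)) (by ring)
  have hp := h.riemannInvariant_eq hab (σ := 1) (by norm_num) ha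
    (t₁ := t - (b - a)) (x₂ := t + 2 * a - b) (t₂ := 0) ⟨by linarith [ht.1], by linarith [ht.2]⟩
    (by ring)
  have hb := h.ut_eq_zero_of_forall_eq_zero (right_mem_Icc.2 hab.le) (fun t => (hbc t).2) t
  have ha' := h.ut_eq_zero_of_forall_eq_zero ha (fun t => (hbc t).1) (t - (b - a))
  linarith

lemma integral_sq_ux_right :
    ∫ t in (0 : ℝ)..2 * (b - a), ux b t ^ 2 = 2 * ∫ x in a..b, (ut x 0 ^ 2 + ux x 0 ^ 2) := by
  have hb : b ∈ Icc a b := right_mem_Icc.2 hab.le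
  have hint : ∀ c d, IntervalIntegrable (fun t => ux b t ^ 2) volume c d :=
    fun c d => ((h.continuous_ux hab hb).pow 2).intervalIntegrable c d
  have hut₀ : ContinuousOn (fun x => ut x 0) (uIcc a b) := by
    rw [uIcc_of_le hab.le]
    exact (h.continuousOn_ut hab).comp (by fun_prop) fun x hx => mk_mem_prod hx (mem_univ 0)
  have hux₀ : ContinuousOn (fun x => ux x 0) (uIcc a b) := by
    rw [uIcc_of_le hab.le]
    exact (h.continuousOn_ux hab).comp (by fun_prop) fun x hx => mk_mem_prod hx (mem_univ 0)
  have hq : IntervalIntegrable (fun x => (ux x 0 - ut x 0) ^ 2) volume a b :=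
    ((hux₀.sub hut₀).pow 2).intervalIntegrable
  have hp : IntervalIntegrable (fun x => (ut x 0 + ux x 0) ^ 2) volume a b :=
    ((hut₀.add hux₀).pow 2).intervalIntegrable
  have hearly : ∫ t in (0 : ℝ)..b - a, ux b t ^ 2 = ∫ x in a..b, (ux x 0 - ut x 0) ^ 2 := by
    rw [intervalIntegral.integral_congr (g := fun t => (ux (b - t) 0 - ut (b - t) 0) ^ 2),
      intervalIntegral.integral_comp_sub_left (fun x => (ux x 0 - ut x 0) ^ 2), sub_sub_cancel,
      sub_zero]
    intro t ht
    rw [uIcc_of_le (by linarith)] at ht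
    simp only [h.ux_right_eq_of_le hab hbc ht]
  have hlate : ∫ t in b - a..2 * (b - a), ux b t ^ 2 = ∫ x in a..b, (ut x 0 + ux x 0) ^ 2 := by
    rw [intervalIntegral.integral_congr
        (g := fun t => (ut (t + (2 * a - b)) 0 + ux (t + (2 * a - b)) 0) ^ 2),
      intervalIntegral.integral_comp_add_right (fun x => (ut x 0 + ux x 0) ^ 2)]
    · congr 1 <;> ring
    intro t ht
    rw [uIcc_of_le (by linarith)] at ht
    simp only [h.ux_right_eq_of_ge hab hbc ht, add_sub_assoc']
  rw [← intervalIntegral.integral_add_adjacent_intervals (hint _ _) (hint _ _), hearly, hlate,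
    ← intervalIntegral.integral_add hq hp, ← intervalIntegral.integral_const_mul]
  congr 1 with x
  ring

theorem observability {T : ℝ} (hT : 2 * (b - a) ≤ T) :
    2 * ∫ x in a..b, (ut x 0 ^ 2 + ux x 0 ^ 2) ≤ ∫ t in (0 : ℝ)..T, ux b t ^ 2 := by
  rw [← h.integral_sq_ux_right hab hbc]
  exact intervalIntegral.integral_mono_interval le_rfl (by linarith) hT
    (Filter.Eventually.of_forall fun t => sq_nonneg (ux b t))
    (((h.continuous_ux hab (right_mem_Icc.2 hab.le)).pow 2).intervalIntegrable 0 T)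

end IsClassicalWaveSolution

theorem observability_inequality_wave
    (u ut ux utt uxx : ℝ → ℝ → ℝ)
    -- u is C² on [-1,1] × ℝ
    (hu : ContDiffOn ℝ 2 (fun p : ℝ × ℝ => u p.1 p.2)
      (Set.Icc (-1 : ℝ) 1 ×ˢ (Set.univ : Set ℝ)))
    -- ut, utt are the first and second time derivatives of u
    (hut : ∀ x ∈ Set.Icc (-1 : ℝ) 1, ∀ t : ℝ,
      HasDerivAt (fun τ => u x τ) (ut x t) t)
    (hutt : ∀ x ∈ Set.Icc (-1 : ℝ) 1, ∀ t : ℝ,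
      HasDerivAt (fun τ => ut x τ) (utt x t) t)
    -- ux, uxx are the first and second space derivatives of u (one-sided at ±1)
    (hux : ∀ t : ℝ, ∀ x ∈ Set.Icc (-1 : ℝ) 1,
      HasDerivWithinAt (fun ξ => u ξ t) (ux x t) (Set.Icc (-1 : ℝ) 1) x)
    (huxx : ∀ t : ℝ, ∀ x ∈ Set.Icc (-1 : ℝ) 1,
      HasDerivWithinAt (fun ξ => ux ξ t) (uxx x t) (Set.Icc (-1 : ℝ) 1) x)
    -- the wave equation u_tt = u_xx on (-1,1) × ℝ
    (hwave : ∀ x ∈ Set.Ioo (-1 : ℝ) 1, ∀ t : ℝ, utt x t = uxx x t)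
    -- homogeneous Dirichlet boundary conditions
    (hbc : ∀ t : ℝ, u (-1) t = 0 ∧ u 1 t = 0) :
    ∀ T : ℝ, 4 ≤ T →
      4 * ((1 / 2) * ∫ x in (-1 : ℝ)..1, ((ut x 0) ^ 2 + (ux x 0) ^ 2))
        ≤ ∫ t in (0 : ℝ)..T, (ux 1 t) ^ 2 := by
  intro T hT
  have h : IsClassicalWaveSolution (-1) 1 u ut ux utt uxx := ⟨hu, hut, hutt, hux, huxx, hwave⟩
  have hobs := h.observability (by norm_num) hbc (T := T) (by linarith)
  linarith
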